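/- arXiv:2112.01239 — 6 statements merged into one kernel-verified Lean document; each statement's English description precedes it below -/
import Mathlib

section
/- Fix a student i ∈ {1,…,n}. (i) The OEF CTMC is lumpable with respect to the partition {S̄ᵢᵃ : a ∈ {0,…,M}}: for all a, b ∈ {0,…,M} and all states v, y ∈ S with v_i = a and y_i = a, one has ∑_{z ∈ S : z_i = b} Q(v,z) = ∑_{z ∈ S : z_i = b} Q(y,z). (ii) Moreover this common value equals Q̄ᵢ(a,b); that is, for any v ∈ S with v_i = a: ∑_{z : z_i = b} Q(v,z) = λ_i if b = a+1; = μ if b = 0 and a ≠ 0; = −∑_{c ≠ a} Q̄ᵢ(a,c) if b = a; and = 0 otherwise. -/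
open scoped BigOperators

noncomputable def Qoff (n M : ℕ) (lam : Fin n → ℝ) (mu : ℝ)
    (x y : Fin n → Fin (M+1)) : ℝ :=
  (∑ j : Fin n,
      if (y j : ℕ) = (x j : ℕ) + 1 ∧ (∀ k, k ≠ j → y k = x k) then lam j else 0)
  + (if y = (fun _ => 0) ∧ x ≠ (fun _ => 0) then mu else 0)

noncomputable def Qgen (n M : ℕ) (lam : Fin n → ℝ) (mu : ℝ)
    (x y : Fin n → Fin (M+1)) : ℝ :=
  if x = y then -∑ z ∈ Finset.univ.erase x, Qoff n M lam mu x z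
  else Qoff n M lam mu x y

noncomputable def QbarOff (M : ℕ) (lam mu : ℝ) (a b : Fin (M+1)) : ℝ :=
  (if (b : ℕ) = (a : ℕ) + 1 then lam else 0) + (if b = 0 ∧ a ≠ 0 then mu else 0)

noncomputable def Qbar (M : ℕ) (lam mu : ℝ) (a b : Fin (M+1)) : ℝ :=
  if a = b then -∑ c ∈ Finset.univ.erase a, QbarOff M lam mu a c
  else QbarOff M lam mu a b

section Aux

variable {n M : ℕ}

lemma Qoff_self (lam : Fin n → ℝ) (mu : ℝ) (v : Fin n → Fin (M+1)) :
    Qoff n M lam mu v v = 0 := by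
  unfold Qoff
  simp

lemma oefCondIff (v z : Fin n → Fin (M+1)) (j : Fin n) (h : (v j : ℕ) < M) :
    ((z j : ℕ) = (v j : ℕ) + 1 ∧ (∀ k, k ≠ j → z k = v k)) ↔
      z = Function.update v j ⟨(v j : ℕ) + 1, by omega⟩ := by
  constructor
  · rintro ⟨h1, h2⟩
    funext k
    by_cases hk : k = j
    · subst hk; rw [Function.update_self]; exact Fin.ext h1
    · rw [Function.update_of_ne hk]; exact h2 k hk
  · rintro rfl
    refine ⟨by simp, fun k hk => ?_⟩
    rw [Function.update_of_ne hk]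

lemma oefCondFalse (v z : Fin n → Fin (M+1)) (j : Fin n) (h : ¬ (v j : ℕ) < M) :
    ¬ ((z j : ℕ) = (v j : ℕ) + 1 ∧ (∀ k, k ≠ j → z k = v k)) := by
  rintro ⟨h1, -⟩
  have := (z j).isLt
  omega

lemma inner_sum_ne (lam : Fin n → ℝ) (v : Fin n → Fin (M+1)) (i : Fin n)
    (b : Fin (M+1)) (j : Fin n) (hj : j ≠ i) :
    ∑ z ∈ Finset.univ.filter (fun z : Fin n → Fin (M+1) => z i = b),
        (if (z j : ℕ) = (v j : ℕ) + 1 ∧ (∀ k, k ≠ j → z k = v k) then lam j else 0)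
    = if (v j : ℕ) < M ∧ b = v i then lam j else 0 := by
  by_cases hM : (v j : ℕ) < M
  · have : ∀ z : Fin n → Fin (M+1), z ∈ Finset.univ.filter (fun z : Fin n → Fin (M+1) => z i = b) →
        (if (z j : ℕ) = (v j : ℕ) + 1 ∧ (∀ k, k ≠ j → z k = v k) then lam j else 0)
        = (if z = Function.update v j ⟨(v j : ℕ) + 1, by omega⟩ then lam j else 0) := by
      intro z _
      simp only [oefCondIff v z j hM]
    rw [Finset.sum_congr rfl this, Finset.sum_ite_eq']
    have hmem : (Function.update v j ⟨(v j : ℕ) + 1, by omega⟩ ∈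
        Finset.univ.filter (fun z : Fin n → Fin (M+1) => z i = b)) ↔ (b = v i) := by
      simp [Function.update_of_ne (Ne.symm hj), eq_comm]
    by_cases hb : b = v i
    · rw [if_pos (hmem.mpr hb), if_pos ⟨hM, hb⟩]
    · rw [if_neg (fun h => hb (hmem.mp h)), if_neg (fun h => hb h.2)]
  · rw [Finset.sum_eq_zero, if_neg (fun h => hM h.1)]
    intro z _
    rw [if_neg (oefCondFalse v z j hM)]

lemma inner_sum_eq (lam : Fin n → ℝ) (v : Fin n → Fin (M+1)) (i : Fin n)
    (b : Fin (M+1)) :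
    ∑ z ∈ Finset.univ.filter (fun z : Fin n → Fin (M+1) => z i = b),
        (if (z i : ℕ) = (v i : ℕ) + 1 ∧ (∀ k, k ≠ i → z k = v k) then lam i else 0)
    = if (b : ℕ) = (v i : ℕ) + 1 then lam i else 0 := by
  by_cases hM : (v i : ℕ) < M
  · have : ∀ z : Fin n → Fin (M+1), z ∈ Finset.univ.filter (fun z : Fin n → Fin (M+1) => z i = b) →
        (if (z i : ℕ) = (v i : ℕ) + 1 ∧ (∀ k, k ≠ i → z k = v k) then lam i else 0)
        = (if z = Function.update v i ⟨(v i : ℕ) + 1, by omega⟩ then lam i else 0) := by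
      intro z _
      simp only [oefCondIff v z i hM]
    rw [Finset.sum_congr rfl this, Finset.sum_ite_eq']
    have hmem : (Function.update v i ⟨(v i : ℕ) + 1, by omega⟩ ∈
        Finset.univ.filter (fun z : Fin n → Fin (M+1) => z i = b)) ↔ ((b : ℕ) = (v i : ℕ) + 1) := by
      simp [Function.update_self, Fin.ext_iff, eq_comm]
    by_cases hb : (b : ℕ) = (v i : ℕ) + 1
    · rw [if_pos (hmem.mpr hb), if_pos hb]
    · rw [if_neg (fun h => hb (hmem.mp h)), if_neg hb]
  · rw [Finset.sum_eq_zero, if_neg (by have := b.isLt; omega)]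
    intro z _
    rw [if_neg (oefCondFalse v z i hM)]

lemma mu_sum (mu : ℝ) (v : Fin n → Fin (M+1)) (i : Fin n) (b : Fin (M+1)) :
    ∑ z ∈ Finset.univ.filter (fun z : Fin n → Fin (M+1) => z i = b),
        (if z = (fun _ => 0) ∧ v ≠ (fun _ => 0) then mu else 0)
    = if b = 0 ∧ v ≠ (fun _ => 0) then mu else 0 := by
  by_cases hv : v = (fun _ => 0)
  · simp [hv]
  · have : ∀ z : Fin n → Fin (M+1), z ∈ Finset.univ.filter (fun z : Fin n → Fin (M+1) => z i = b) →
        (if z = (fun _ => 0) ∧ v ≠ (fun _ => 0) then mu else 0)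
        = (if z = (fun _ => (0 : Fin (M+1))) then mu else 0) := by
      intro z _; simp [hv]
    rw [Finset.sum_congr rfl this, Finset.sum_ite_eq']
    simp [hv, eq_comm]

/-- The key computation: block sums of the off-diagonal part. -/
lemma sum_Qoff_filter (lam : Fin n → ℝ) (mu : ℝ) (v : Fin n → Fin (M+1))
    (i : Fin n) (b : Fin (M+1)) :
    ∑ z ∈ Finset.univ.filter (fun z : Fin n → Fin (M+1) => z i = b), Qoff n M lam mu v z
    = (if (b : ℕ) = (v i : ℕ) + 1 then lam i else 0)
      + (if b = v i then
          ∑ j ∈ (Finset.univ.erase i).filter (fun j => (v j : ℕ) < M), lam j else 0)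
      + (if b = 0 ∧ v ≠ (fun _ => 0) then mu else 0) := by
  unfold Qoff
  rw [Finset.sum_add_distrib, mu_sum, Finset.sum_comm]
  congr 1
  rw [← Finset.sum_erase_add _ _ (Finset.mem_univ i), inner_sum_eq]
  rw [add_comm]
  congr 1
  have : ∀ j ∈ Finset.univ.erase i,
      (∑ z ∈ Finset.univ.filter (fun z : Fin n → Fin (M+1) => z i = b),
        (if (z j : ℕ) = (v j : ℕ) + 1 ∧ (∀ k, k ≠ j → z k = v k) then lam j else 0))
      = if (v j : ℕ) < M ∧ b = v i then lam j else 0 := by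
    intro j hj
    exact inner_sum_ne lam v i b j (Finset.ne_of_mem_erase hj)
  rw [Finset.sum_congr rfl this]
  by_cases hb : b = v i
  · rw [if_pos hb, Finset.sum_filter]
    exact Finset.sum_congr rfl (fun j _ => by simp [hb])
  · rw [if_neg hb, Finset.sum_eq_zero]
    intro j _
    rw [if_neg (fun h => hb h.2)]

lemma sum_val_succ (a : Fin (M+1)) (c : ℝ) :
    ∑ b : Fin (M+1), (if (b : ℕ) = (a : ℕ) + 1 then c else 0)
    = if (a : ℕ) < M then c else 0 := by
  by_cases hM : (a : ℕ) < M
  · have : ∀ b : Fin (M+1), ((b : ℕ) = (a : ℕ) + 1) ↔ b = ⟨(a : ℕ) + 1, by omega⟩ := by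
      intro b; simp [Fin.ext_iff]
    simp only [this]
    rw [Finset.sum_ite_eq' Finset.univ]
    simp [hM]
  · rw [if_neg hM, Finset.sum_eq_zero]
    intro b _
    rw [if_neg (by have := b.isLt; omega)]

/-- Total off-diagonal row sum. -/
lemma sum_Qoff_total (lam : Fin n → ℝ) (mu : ℝ) (v : Fin n → Fin (M+1)) (i : Fin n) :
    ∑ z, Qoff n M lam mu v z
    = (if (v i : ℕ) < M then lam i else 0)
      + (∑ j ∈ (Finset.univ.erase i).filter (fun j => (v j : ℕ) < M), lam j)
      + (if v ≠ (fun _ => 0) then mu else 0) := by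
  have := Finset.sum_fiberwise Finset.univ (fun z : Fin n → Fin (M+1) => z i)
      (fun z => Qoff n M lam mu v z)
  rw [← this]
  have : ∀ b : Fin (M+1),
      ∑ z ∈ Finset.univ.filter (fun z : Fin n → Fin (M+1) => z i = b), Qoff n M lam mu v z
      = (if (b : ℕ) = (v i : ℕ) + 1 then lam i else 0)
        + (if b = v i then
            ∑ j ∈ (Finset.univ.erase i).filter (fun j => (v j : ℕ) < M), lam j else 0)
        + (if b = 0 ∧ v ≠ (fun _ => 0) then mu else 0) := fun b => sum_Qoff_filter lam mu v i b
  rw [Finset.sum_congr rfl (fun b _ => this b)]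
  rw [Finset.sum_add_distrib, Finset.sum_add_distrib, sum_val_succ]
  congr 1
  · congr 1
    rw [Finset.sum_ite_eq' Finset.univ]
    simp
  · by_cases hv : v = (fun _ => 0)
    · simp [hv]
    · simp only [hv, ne_eq, not_false_eq_true, and_true, if_true]
      have : ∀ b : Fin (M+1), (if b = 0 then mu else 0) = if b = (0 : Fin (M+1)) then mu else 0 :=
        fun b => rfl
      rw [Finset.sum_ite_eq' Finset.univ]
      simp

lemma sum_erase_Qbar (l mu : ℝ) (a : Fin (M+1)) :
    ∑ c ∈ Finset.univ.erase a, Qbar M l mu a c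
    = (if (a : ℕ) < M then l else 0) + (if a ≠ 0 then mu else 0) := by
  have h1 : ∀ c ∈ Finset.univ.erase a, Qbar M l mu a c = QbarOff M l mu a c := by
    intro c hc
    rw [Qbar, if_neg (Ne.symm (Finset.ne_of_mem_erase hc))]
  rw [Finset.sum_congr rfl h1]
  unfold QbarOff
  rw [Finset.sum_add_distrib]
  congr 1
  · rw [Finset.sum_erase _ (by simp), sum_val_succ]
  · by_cases ha : a = 0
    · simp [ha]
    · simp only [ha, ne_eq, not_false_eq_true, and_true, if_true]
      rw [Finset.sum_ite_eq' (Finset.univ.erase a)]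
      simp [Ne.symm ha]

lemma Qgen_eq (lam : Fin n → ℝ) (mu : ℝ) (v z : Fin n → Fin (M+1)) :
    Qgen n M lam mu v z
    = Qoff n M lam mu v z + (if z = v then -(∑ w, Qoff n M lam mu v w) else 0) := by
  unfold Qgen
  by_cases h : v = z
  · subst h
    rw [if_pos rfl, if_pos rfl, Qoff_self, zero_add,
      Finset.sum_erase _ (Qoff_self lam mu v)]
  · rw [if_neg h, if_neg (Ne.symm h), add_zero]

/-- Part (ii): the block sum formula. -/
lemma block_sum (lam : Fin n → ℝ) (mu : ℝ) (i : Fin n)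
    (a b : Fin (M+1)) (v : Fin n → Fin (M+1)) (hv : v i = a) :
    ∑ z ∈ Finset.univ.filter (fun z : Fin n → Fin (M+1) => z i = b), Qgen n M lam mu v z
    = if (b : ℕ) = (a : ℕ) + 1 then lam i
      else if b = 0 ∧ a ≠ 0 then mu
      else if b = a then -∑ c ∈ Finset.univ.erase a, Qbar M (lam i) mu a c
      else 0 := by
  subst hv
  have key : ∑ z ∈ Finset.univ.filter (fun z : Fin n → Fin (M+1) => z i = b), Qgen n M lam mu v z
      = (∑ z ∈ Finset.univ.filter (fun z : Fin n → Fin (M+1) => z i = b), Qoff n M lam mu v z)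
        + (if b = v i then -(∑ w, Qoff n M lam mu v w) else 0) := by
    rw [Finset.sum_congr rfl (fun z _ => Qgen_eq lam mu v z), Finset.sum_add_distrib]
    congr 1
    rw [Finset.sum_ite_eq' (Finset.univ.filter (fun z : Fin n → Fin (M+1) => z i = b))]
    simp [eq_comm]
  rw [key, sum_Qoff_filter, sum_Qoff_total lam mu v i]
  set S := ∑ j ∈ (Finset.univ.erase i).filter (fun j => (v j : ℕ) < M), lam j with hS
  by_cases hA : (b : ℕ) = (v i : ℕ) + 1
  · have hba : b ≠ v i := by intro h; rw [h] at hA; omega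
    have hb0 : b ≠ 0 := by
      intro h
      rw [h] at hA
      exact absurd hA (by simp)
    simp [hA, hba, hb0]
  · by_cases hB : b = 0 ∧ v i ≠ 0
    · have hba : b ≠ v i := by rw [hB.1]; exact Ne.symm hB.2
      have hv0 : v ≠ (fun _ => 0) := by
        intro h; exact hB.2 (by rw [h])
      simp [hA, hB.1, hB.2, hba, hv0, Ne.symm hB.2]
    · by_cases hC : b = v i
      · have hmu : (if b = 0 ∧ v ≠ (fun _ => 0) then mu else 0)
            - (if v ≠ (fun _ => 0) then mu else 0)
            = -(if v i ≠ 0 then mu else 0) := by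
          by_cases hvi : v i = 0
          · have hb0 : b = 0 := by rw [hC, hvi]
            simp only [hvi, ne_eq, not_true_eq_false, if_false, hb0, true_and, neg_zero]
            by_cases hv0 : v = (fun _ => 0) <;> simp [hv0]
          · have hv0 : v ≠ (fun _ => 0) := fun h => hvi (by rw [h])
            have hb0 : ¬ (b = 0) := by rw [hC]; exact hvi
            simp [hvi, hv0, hb0]
        simp only [if_neg hA, if_neg hB, if_pos hC, sum_erase_Qbar]
        linarith [hmu]
      · have hmu0 : ¬ (b = 0 ∧ v ≠ (fun _ => 0)) := by
          rintro ⟨hb0, -⟩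
          rcases Decidable.em (v i = 0) with h | h
          · exact hC (by rw [hb0, h])
          · exact hB ⟨hb0, h⟩
        simp [hA, hB, hC, hmu0]

end Aux

/-- The OEF CTMC is lumpable with respect to the partition
`{x : x i = a}` indexed by `a ∈ {0,…,M}`, and the common block transition rate
equals the lumped generator `Q̄ᵢ(a,b)`. -/
theorem oef_ctmc_lumpable (n M : ℕ) (hn : 1 ≤ n) (hM : 1 ≤ M)
    (lam : Fin n → ℝ) (hlam : ∀ j, 0 < lam j) (mu : ℝ) (hmu : 0 < mu)
    (i : Fin n) :
    (∀ (a b : Fin (M+1)) (v y : Fin n → Fin (M+1)), v i = a → y i = a →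
        ∑ z ∈ Finset.univ.filter (fun z => z i = b), Qgen n M lam mu v z
          = ∑ z ∈ Finset.univ.filter (fun z => z i = b), Qgen n M lam mu y z)
    ∧
    (∀ (a b : Fin (M+1)) (v : Fin n → Fin (M+1)), v i = a →
        ∑ z ∈ Finset.univ.filter (fun z => z i = b), Qgen n M lam mu v z
          = if (b : ℕ) = (a : ℕ) + 1 then lam i
            else if b = 0 ∧ a ≠ 0 then mu
            else if b = a then -∑ c ∈ Finset.univ.erase a, Qbar M (lam i) mu a c
            else 0) := by
  constructor
  · intro a b v y hv hy
    rw [block_sum lam mu i a b v hv, block_sum lam mu i a b y hy]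
  · intro a b v hv
    exact block_sum lam mu i a b v hv
end

section
/- Fix a student i ∈ {1,…,n}. For every t ≥ 0 and every a ∈ {0,…,M}, the transient probability of the lumped chain equals the block sum of transient probabilities of the original chain: π̄ᵢ^t(a) = ∑_{x ∈ S : x_i = a} π^t(x). -/
open scoped BigOperators

noncomputable def Pmat (n M : ℕ) (lam : Fin n → ℝ) (mu qhat : ℝ) :
    Matrix (Fin n → Fin (M+1)) (Fin n → Fin (M+1)) ℝ :=
  1 + qhat⁻¹ • Matrix.of (Qgen n M lam mu)

noncomputable def PbarMat (M : ℕ) (lam mu qhat : ℝ) :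
    Matrix (Fin (M+1)) (Fin (M+1)) ℝ :=
  1 + qhat⁻¹ • Matrix.of (Qbar M lam mu)

noncomputable def delta0 (n M : ℕ) : (Fin n → Fin (M+1)) → ℝ :=
  fun x => if x = (fun _ => 0) then 1 else 0

noncomputable def delta0bar (M : ℕ) : Fin (M+1) → ℝ :=
  fun a => if a = 0 then 1 else 0

noncomputable def transientP (n M : ℕ) (lam : Fin n → ℝ) (mu qhat t : ℝ)
    (x : Fin n → Fin (M+1)) : ℝ :=
  ∑' k : ℕ, Real.exp (-(qhat * t)) * (qhat * t) ^ k / (Nat.factorial k) *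
    Matrix.vecMul (delta0 n M) ((Pmat n M lam mu qhat) ^ k) x

noncomputable def transientPbar (M : ℕ) (lam mu qhat t : ℝ) (a : Fin (M+1)) : ℝ :=
  ∑' k : ℕ, Real.exp (-(qhat * t)) * (qhat * t) ^ k / (Nat.factorial k) *
    Matrix.vecMul (delta0bar M) ((PbarMat M lam mu qhat) ^ k) a

section Aux

variable {n M : ℕ} (lam : Fin n → ℝ) (mu qhat : ℝ) (i : Fin n)

/-- Fiber sum of the off-diagonal part, for a fiber not containing `x`. -/
lemma sum_Qoff_fiber (x : Fin n → Fin (M+1)) (b : Fin (M+1)) (hb : b ≠ x i) :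
    ∑ y ∈ Finset.univ.filter (fun y => y i = b), Qoff n M lam mu x y
      = QbarOff M (lam i) mu (x i) b := by
  unfold Qoff QbarOff
  rw [Finset.sum_add_distrib]
  congr 1
  · rw [Finset.sum_comm]
    rw [Finset.sum_eq_single i]
    · by_cases hinc : (b : ℕ) = (x i : ℕ) + 1
      · rw [if_pos hinc]
        rw [Finset.sum_eq_single (Function.update x i b)]
        · rw [if_pos]
          refine ⟨?_, ?_⟩
          · rw [Function.update_self]; exact hinc
          · intro k hk; rw [Function.update_of_ne hk]
        · intro y hy hne
          rw [if_neg]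
          rintro ⟨h1, h2⟩
          apply hne
          funext k
          by_cases hk : k = i
          · subst hk; rw [Function.update_self]
            exact (Finset.mem_filter.mp hy).2
          · rw [Function.update_of_ne hk]; exact h2 k hk
        · intro h
          exact absurd (Finset.mem_filter.mpr
            ⟨Finset.mem_univ _, by simp [Function.update_self]⟩) h
      · rw [if_neg hinc]
        apply Finset.sum_eq_zero
        intro y hy
        rw [if_neg]
        rintro ⟨h1, _⟩
        apply hinc
        rw [← (Finset.mem_filter.mp hy).2]; exact h1
    · intro j _ hj
      apply Finset.sum_eq_zero
      intro y hy
      rw [if_neg]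
      rintro ⟨_, h2⟩
      apply hb
      rw [← (Finset.mem_filter.mp hy).2, h2 i (Ne.symm hj)]
    · intro h; exact absurd (Finset.mem_univ i) h
  · have hrw : ∀ y : Fin n → Fin (M+1),
        (if y = (fun _ => 0) ∧ x ≠ (fun _ => 0) then mu else 0)
          = if y = (fun _ => 0) then (if x ≠ (fun _ => 0) then mu else 0) else 0 := by
      intro y; by_cases h1 : y = (fun _ => 0) <;> by_cases h2 : x ≠ (fun _ => 0) <;>
        simp [h1, h2]
    rw [Finset.sum_congr rfl fun y _ => hrw y, Finset.sum_ite_eq']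
    by_cases hb0 : b = 0
    · subst hb0
      have hxi : x i ≠ 0 := fun h => hb h.symm
      have hx : x ≠ (fun _ => 0) := fun h => hxi (by rw [h])
      simp [hx, hxi, Finset.mem_filter]
    · have h0 : ((fun _ => (0 : Fin (M+1))) : Fin n → Fin (M+1)) ∉
          Finset.univ.filter (fun y => y i = b) := by
        simp only [Finset.mem_filter, Finset.mem_univ, true_and]
        exact fun hh => hb0 hh.symm
      rw [if_neg h0, if_neg (by rintro ⟨h, _⟩; exact hb0 h)]

lemma Qgen_row_sum (x : Fin n → Fin (M+1)) :
    ∑ y, Qgen n M lam mu x y = 0 := by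
  rw [← Finset.add_sum_erase _ _ (Finset.mem_univ x)]
  have h1 : Qgen n M lam mu x x = -∑ z ∈ Finset.univ.erase x, Qoff n M lam mu x z :=
    if_pos rfl
  have h2 : ∑ y ∈ Finset.univ.erase x, Qgen n M lam mu x y
      = ∑ y ∈ Finset.univ.erase x, Qoff n M lam mu x y :=
    Finset.sum_congr rfl fun y hy => if_neg (Finset.ne_of_mem_erase hy).symm
  rw [h1, h2, neg_add_cancel]

lemma lump_Q (x : Fin n → Fin (M+1)) (b : Fin (M+1)) :
    ∑ y ∈ Finset.univ.filter (fun y => y i = b), Qgen n M lam mu x y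
      = Qbar M (lam i) mu (x i) b := by
  by_cases hb : b = x i
  · subst hb
    have h0 := Qgen_row_sum lam mu x
    rw [← Finset.sum_fiberwise Finset.univ (fun y => y i) (Qgen n M lam mu x)] at h0
    rw [← Finset.add_sum_erase _ _ (Finset.mem_univ (x i))] at h0
    have h1 : ∑ c ∈ Finset.univ.erase (x i),
        (∑ y ∈ Finset.univ.filter (fun y => y i = c), Qgen n M lam mu x y)
        = ∑ c ∈ Finset.univ.erase (x i), QbarOff M (lam i) mu (x i) c := by
      refine Finset.sum_congr rfl fun c hc => ?_
      have hcx : c ≠ x i := Finset.ne_of_mem_erase hc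
      have h2 : ∀ y ∈ Finset.univ.filter (fun y => y i = c),
          Qgen n M lam mu x y = Qoff n M lam mu x y := fun y hy =>
        if_neg (fun h => hcx (by rw [← (Finset.mem_filter.mp hy).2, ← h]))
      rw [Finset.sum_congr rfl h2, sum_Qoff_fiber lam mu i x c hcx]
    rw [h1] at h0
    have h3 : Qbar M (lam i) mu (x i) (x i)
        = -∑ c ∈ Finset.univ.erase (x i), QbarOff M (lam i) mu (x i) c := if_pos rfl
    rw [h3]; linarith
  · have h2 : ∀ y ∈ Finset.univ.filter (fun y => y i = b),
        Qgen n M lam mu x y = Qoff n M lam mu x y := fun y hy =>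
      if_neg (fun h => hb (by rw [← (Finset.mem_filter.mp hy).2, ← h]))
    rw [Finset.sum_congr rfl h2, sum_Qoff_fiber lam mu i x b hb]
    exact (if_neg (fun h : x i = b => hb h.symm)).symm

lemma Pmat_apply (x y : Fin n → Fin (M+1)) :
    Pmat n M lam mu qhat x y
      = (if x = y then 1 else 0) + qhat⁻¹ * Qgen n M lam mu x y := by
  simp [Pmat, Matrix.add_apply, Matrix.smul_apply, Matrix.one_apply, smul_eq_mul]

lemma PbarMat_apply (a b : Fin (M+1)) :
    PbarMat M (lam i) mu qhat a b
      = (if a = b then 1 else 0) + qhat⁻¹ * Qbar M (lam i) mu a b := by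
  simp [PbarMat, Matrix.add_apply, Matrix.smul_apply, Matrix.one_apply, smul_eq_mul]

lemma lump_P (x : Fin n → Fin (M+1)) (b : Fin (M+1)) :
    ∑ y ∈ Finset.univ.filter (fun y => y i = b), Pmat n M lam mu qhat x y
      = PbarMat M (lam i) mu qhat (x i) b := by
  simp only [Pmat_apply, PbarMat_apply]
  rw [Finset.sum_add_distrib, ← Finset.mul_sum, lump_Q]
  congr 1
  have hrw : ∀ y : Fin n → Fin (M+1),
      (if x = y then (1:ℝ) else 0) = if y = x then 1 else 0 := fun y => by
    by_cases h : x = y <;> simp [h, eq_comm]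
  rw [Finset.sum_congr rfl fun y _ => hrw y, Finset.sum_ite_eq']
  by_cases h : x i = b <;> simp [Finset.mem_filter, h]

lemma Pmat_row_sum (x : Fin n → Fin (M+1)) :
    ∑ y, Pmat n M lam mu qhat x y = 1 := by
  simp only [Pmat_apply]
  rw [Finset.sum_add_distrib, ← Finset.mul_sum, Qgen_row_sum, mul_zero, add_zero]
  simp

lemma Qoff_nonneg (hlam : ∀ j, 0 < lam j) (hmu : 0 < mu)
    (x y : Fin n → Fin (M+1)) : 0 ≤ Qoff n M lam mu x y := by
  unfold Qoff
  apply add_nonneg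
  · apply Finset.sum_nonneg
    intro j _
    split
    · exact (hlam j).le
    · rfl
  · split
    · exact hmu.le
    · rfl

lemma Pmat_nonneg (hlam : ∀ j, 0 < lam j) (hmu : 0 < mu) (hq : 0 < qhat)
    (hqbound : ∀ x : Fin n → Fin (M+1), -(Qgen n M lam mu x x) ≤ qhat)
    (x y : Fin n → Fin (M+1)) : 0 ≤ Pmat n M lam mu qhat x y := by
  rw [Pmat_apply]
  by_cases h : x = y
  · subst h
    rw [if_pos rfl]
    have h1 : -qhat ≤ Qgen n M lam mu x x := by linarith [hqbound x]
    have h2 : qhat⁻¹ * (-qhat) ≤ qhat⁻¹ * Qgen n M lam mu x x :=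
      mul_le_mul_of_nonneg_left h1 (inv_nonneg.mpr hq.le)
    have h3 : qhat⁻¹ * (-qhat) = -1 := by rw [mul_neg, inv_mul_cancel₀ hq.ne']
    rw [h3] at h2
    linarith [h2]
  · rw [if_neg h]
    have h1 : Qgen n M lam mu x y = Qoff n M lam mu x y := if_neg h
    have h2 := Qoff_nonneg lam mu hlam hmu x y
    rw [h1]
    have h3 : 0 ≤ qhat⁻¹ * Qoff n M lam mu x y :=
      mul_nonneg (inv_nonneg.mpr hq.le) h2
    linarith [h3]

lemma prob_vec (hlam : ∀ j, 0 < lam j) (hmu : 0 < mu) (hq : 0 < qhat)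
    (hqbound : ∀ x : Fin n → Fin (M+1), -(Qgen n M lam mu x x) ≤ qhat) (k : ℕ) :
    (∀ x, 0 ≤ Matrix.vecMul (delta0 n M) ((Pmat n M lam mu qhat) ^ k) x)
      ∧ ∑ x, Matrix.vecMul (delta0 n M) ((Pmat n M lam mu qhat) ^ k) x = 1 := by
  induction k with
  | zero =>
    rw [pow_zero]
    constructor
    · intro x
      rw [Matrix.vecMul_one]
      unfold delta0
      split
      · exact zero_le_one
      · rfl
    · rw [Matrix.vecMul_one]
      unfold delta0
      rw [Finset.sum_ite_eq']
      simp
  | succ k ih =>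
    obtain ⟨h0, h1⟩ := ih
    rw [pow_succ]
    constructor
    · intro x
      rw [← Matrix.vecMul_vecMul]
      simp only [Matrix.vecMul, dotProduct]
      apply Finset.sum_nonneg
      intro y _
      exact mul_nonneg (h0 y) (Pmat_nonneg lam mu qhat hlam hmu hq hqbound y x)
    · rw [← Matrix.vecMul_vecMul]
      simp only [Matrix.vecMul, dotProduct]
      rw [Finset.sum_comm]
      calc ∑ y, ∑ x, Matrix.vecMul (delta0 n M) ((Pmat n M lam mu qhat) ^ k) y
              * Pmat n M lam mu qhat y x
          = ∑ y, Matrix.vecMul (delta0 n M) ((Pmat n M lam mu qhat) ^ k) y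
              * ∑ x, Pmat n M lam mu qhat y x := by
            refine Finset.sum_congr rfl fun y _ => ?_
            rw [Finset.mul_sum]
        _ = 1 := by
            rw [Finset.sum_congr rfl fun y _ => by rw [Pmat_row_sum, mul_one]]
            exact h1

lemma block_pow (k : ℕ) (a : Fin (M+1)) :
    ∑ x ∈ Finset.univ.filter (fun x => x i = a),
        Matrix.vecMul (delta0 n M) ((Pmat n M lam mu qhat) ^ k) x
      = Matrix.vecMul (delta0bar M) ((PbarMat M (lam i) mu qhat) ^ k) a := by
  induction k generalizing a with
  | zero =>
    rw [pow_zero, pow_zero, Matrix.vecMul_one, Matrix.vecMul_one]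
    unfold delta0 delta0bar
    have hrw : ∀ x : Fin n → Fin (M+1),
        (if x = (fun _ => 0) then (1:ℝ) else 0)
          = if x = (fun _ => 0) then 1 else 0 := fun _ => rfl
    rw [Finset.sum_ite_eq']
    by_cases h : a = 0
    · subst h
      simp [Finset.mem_filter]
    · rw [if_neg (by
        simp only [Finset.mem_filter, Finset.mem_univ, true_and]
        exact fun hh => h hh.symm), if_neg h]
  | succ k ih =>
    rw [pow_succ, pow_succ, ← Matrix.vecMul_vecMul, ← Matrix.vecMul_vecMul]
    simp only [Matrix.vecMul, dotProduct]
    rw [Finset.sum_comm]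
    calc ∑ y, ∑ x ∈ Finset.univ.filter (fun x => x i = a),
            Matrix.vecMul (delta0 n M) ((Pmat n M lam mu qhat) ^ k) y
              * Pmat n M lam mu qhat y x
        = ∑ y, Matrix.vecMul (delta0 n M) ((Pmat n M lam mu qhat) ^ k) y
              * PbarMat M (lam i) mu qhat (y i) a := by
          refine Finset.sum_congr rfl fun y _ => ?_
          rw [← Finset.mul_sum, lump_P]
      _ = ∑ b, ∑ y ∈ Finset.univ.filter (fun y => y i = b),
            Matrix.vecMul (delta0 n M) ((Pmat n M lam mu qhat) ^ k) y
              * PbarMat M (lam i) mu qhat (y i) a := by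
          rw [Finset.sum_fiberwise]
      _ = ∑ b, Matrix.vecMul (delta0bar M) ((PbarMat M (lam i) mu qhat) ^ k) b
              * PbarMat M (lam i) mu qhat b a := by
          refine Finset.sum_congr rfl fun b _ => ?_
          rw [← ih b, Finset.sum_mul]
          refine Finset.sum_congr rfl fun y hy => ?_
          rw [(Finset.mem_filter.mp hy).2]

end Aux

/-- For every `t ≥ 0` and block index `a`, the transient probability
of the lumped chain equals the block sum of transient probabilities of the original
OEF chain. -/
theorem transient_prob_lumped_eq_block_sum (n M : ℕ) (hn : 1 ≤ n) (hM : 1 ≤ M)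
    (lam : Fin n → ℝ) (hlam : ∀ j, 0 < lam j) (mu : ℝ) (hmu : 0 < mu)
    (qhat : ℝ) (hq : 0 < qhat)
    (hqbound : ∀ x : Fin n → Fin (M+1), -(Qgen n M lam mu x x) ≤ qhat)
    (i : Fin n) :
    ∀ t : ℝ, 0 ≤ t → ∀ a : Fin (M+1),
      transientPbar M (lam i) mu qhat t a
        = ∑ x ∈ Finset.univ.filter (fun x => x i = a), transientP n M lam mu qhat t x := by
  intro t ht a
  have hc : ∀ k : ℕ, 0 ≤ Real.exp (-(qhat * t)) * (qhat * t) ^ k / (Nat.factorial k) := by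
    intro k
    have h1 : (0:ℝ) ≤ qhat * t := mul_nonneg hq.le ht
    positivity
  have hv := prob_vec lam mu qhat hlam hmu hq hqbound
  have hvle : ∀ (k : ℕ) (x : Fin n → Fin (M+1)),
      Matrix.vecMul (delta0 n M) ((Pmat n M lam mu qhat) ^ k) x ≤ 1 := by
    intro k x
    obtain ⟨h0, h1⟩ := hv k
    calc Matrix.vecMul (delta0 n M) ((Pmat n M lam mu qhat) ^ k) x
        ≤ ∑ y, Matrix.vecMul (delta0 n M) ((Pmat n M lam mu qhat) ^ k) y :=
          Finset.single_le_sum (fun y _ => h0 y) (Finset.mem_univ x)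
      _ = 1 := h1
  have hsum : ∀ x ∈ Finset.univ.filter (fun x => x i = a),
      Summable (fun k : ℕ => Real.exp (-(qhat * t)) * (qhat * t) ^ k / (Nat.factorial k) *
        Matrix.vecMul (delta0 n M) ((Pmat n M lam mu qhat) ^ k) x) := by
    intro x _
    apply Summable.of_nonneg_of_le
      (fun k => mul_nonneg (hc k) ((hv k).1 x))
      (fun k => mul_le_of_le_one_right (hc k) (hvle k x))
    have hs : Summable (fun k : ℕ => Real.exp (-(qhat * t)) * ((qhat * t) ^ k / (Nat.factorial k))) :=
      (Real.summable_pow_div_factorial (qhat * t)).mul_left _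
    refine hs.congr fun k => ?_
    rw [mul_div_assoc]
  unfold transientP transientPbar
  rw [← Summable.tsum_finsetSum hsum]
  apply tsum_congr
  intro k
  rw [← Finset.mul_sum, block_pow]
end

section
/- Fix a student i ∈ {1,…,n}. For every t ≥ 0, the expected transient net reward of student i computed in the original chain equals that computed in the lumped chain: ∑_{x ∈ S} R^{l,i}(x) · π^t(x) = ∑_{a=0}^{M} R̄^{l,i}(a) · π̄ᵢ^t(a). -/
open scoped BigOperators

/-!
Projecting a state onto the coordinate of student `i` lumps the chain exactly. From a state `x`,
the total rate into the states `y` with `yᵢ = b ≠ xᵢ` is the lumped rate from `xᵢ` to `b`: arrivals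
of the other students keep `yᵢ = xᵢ`, an arrival of student `i` raises `xᵢ` by one, and the
instructor resets every coordinate to `0`. Because generators have zero row sums, the diagonal
fibre agrees as well. With the `0/1` lumping matrix `Π` this reads `Q Π = Π Q̄ᵢ`, hence
`Pᵏ Π = Π P̄ᵢᵏ` and `δ₀ Π = δ₀`, so `Π` maps the uniformization series of the chain term by term
onto that of the lumped chain. The reward of student `i` depends on `xᵢ` alone, so its expectation
may be computed from the lumped distribution.
-/

open Finset Matrix

section Lumping

variable {σ τ : Type*} [DecidableEq τ]

def lumpMatrix (R : Type*) [Zero R] [One R] (f : σ → τ) : Matrix σ τ R :=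
  of fun x b => if f x = b then 1 else 0

variable {R : Type*} [Semiring R]

lemma mul_lumpMatrix_apply {ι : Type*} [Fintype σ] (f : σ → τ) (A : Matrix ι σ R) (x : ι)
    (b : τ) : (A * lumpMatrix R f) x b = ∑ y with f y = b, A x y := by
  rw [Matrix.mul_apply]
  simp [lumpMatrix, sum_filter]

lemma lumpMatrix_mul_apply {κ : Type*} [Fintype τ] (f : σ → τ) (B : Matrix τ κ R) (x : σ)
    (c : κ) : (lumpMatrix R f * B) x c = B (f x) c := by
  rw [Matrix.mul_apply]
  simp [lumpMatrix]

variable [Fintype σ]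

lemma vecMul_lumpMatrix_apply (f : σ → τ) (v : σ → R) (b : τ) :
    (v ᵥ* lumpMatrix R f) b = ∑ x with f x = b, v x := by
  simp [vecMul, dotProduct, lumpMatrix, sum_filter]

lemma sum_comp_mul_eq_sum_mul_vecMul_lumpMatrix [Fintype τ] (f : σ → τ) (g : τ → R)
    (v : σ → R) : ∑ x, g (f x) * v x = ∑ b, g b * (v ᵥ* lumpMatrix R f) b := by
  simp_rw [vecMul_lumpMatrix_apply, mul_sum]
  rw [← sum_fiberwise univ f (fun x => g (f x) * v x)]
  refine sum_congr rfl fun b _ => sum_congr rfl fun x hx => ?_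
  rw [(mem_filter.1 hx).2]

end Lumping

section Intertwining

variable {R σ τ : Type*} [Fintype σ] [Fintype τ] [DecidableEq σ] [DecidableEq τ]

lemma Matrix.pow_mul_eq_mul_pow_of_mul_eq [Semiring R] {P : Matrix σ σ R} {L : Matrix σ τ R}
    {P' : Matrix τ τ R} (h : P * L = L * P') (k : ℕ) : P ^ k * L = L * P' ^ k := by
  induction k with
  | zero => simp
  | succ k ih =>
    rw [pow_succ, Matrix.mul_assoc, h, ← Matrix.mul_assoc, ih, Matrix.mul_assoc, ← pow_succ]

lemma Matrix.one_add_smul_mul_eq_mul_one_add_smul [CommSemiring R] {Q : Matrix σ σ R}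
    {L : Matrix σ τ R} {Q' : Matrix τ τ R} (h : Q * L = L * Q') (c : R) :
    (1 + c • Q) * L = L * (1 + c • Q') := by
  rw [Matrix.add_mul, Matrix.one_mul, Matrix.smul_mul, h, Matrix.mul_add, Matrix.mul_one,
    Matrix.mul_smul]

end Intertwining

section Generator

variable {R σ : Type*} [Ring R] [Fintype σ] [DecidableEq σ]

def generatorOfRates (r : σ → σ → R) : Matrix σ σ R :=
  of fun x y => if x = y then -∑ z ∈ univ.erase x, r x z else r x y

lemma generatorOfRates_apply_of_ne (r : σ → σ → R) {x y : σ} (h : x ≠ y) :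
    generatorOfRates r x y = r x y :=
  if_neg h

lemma sum_generatorOfRates_apply (r : σ → σ → R) (x : σ) :
    ∑ y, generatorOfRates r x y = 0 := by
  rw [← add_sum_erase _ _ (mem_univ x),
    sum_congr rfl fun y hy => generatorOfRates_apply_of_ne r (ne_of_mem_erase hy).symm]
  simp [generatorOfRates]

lemma generatorOfRates_mul_lumpMatrix {τ : Type*} [Fintype τ] [DecidableEq τ] (f : σ → τ)
    {r : σ → σ → R} {r' : τ → τ → R}
    (h : ∀ x b, b ≠ f x → ∑ y with f y = b, r x y = r' (f x) b) :
    generatorOfRates r * lumpMatrix R f = lumpMatrix R f * generatorOfRates r' := by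
  have hfiber : ∀ x b, b ≠ f x →
      ∑ y with f y = b, generatorOfRates r x y = r' (f x) b := fun x b hb => by
    rw [← h x b hb]
    refine sum_congr rfl fun y hy => generatorOfRates_apply_of_ne r ?_
    rintro rfl
    exact hb (mem_filter.1 hy).2.symm
  ext x b
  rw [mul_lumpMatrix_apply, lumpMatrix_mul_apply]
  rcases eq_or_ne b (f x) with rfl | hb
  · have hrow := sum_generatorOfRates_apply r x
    rw [← sum_fiberwise univ f, ← add_sum_erase _ _ (mem_univ (f x)),
      sum_congr rfl fun c hc => hfiber x c (ne_of_mem_erase hc)] at hrow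
    simp only [generatorOfRates, of_apply, if_true]
    exact eq_neg_of_add_eq_zero_left hrow
  · rw [hfiber x b hb, generatorOfRates_apply_of_ne r' hb.symm]

end Generator

section Uniformization

variable {σ : Type*} [Fintype σ] [DecidableEq σ]

noncomputable def uniformizedTransient (P : Matrix σ σ ℝ) (v : σ → ℝ) (q t : ℝ) (y : σ) : ℝ :=
  ∑' k : ℕ, Real.exp (-(q * t)) * (q * t) ^ k / (Nat.factorial k) * (v ᵥ* P ^ k) y

lemma summable_uniformizedTransient_term (P : Matrix σ σ ℝ) (v : σ → ℝ) (q t : ℝ) (y : σ) :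
    Summable fun k : ℕ =>
      Real.exp (-(q * t)) * (q * t) ^ k / (Nat.factorial k) * (v ᵥ* P ^ k) y := by
  -- any matrix norm makes the exponential series of `(q t) • P` summable, entrywise in particular
  let := Matrix.linftyOpNormedRing (n := σ) (α := ℝ)
  let := Matrix.linftyOpNormedAlgebra (n := σ) (α := ℝ) (R := ℝ)
  have hexp := NormedSpace.expSeries_summable' (𝕂 := ℝ) ((q * t) • P)
  have hentry : ∀ z, Summable fun k : ℕ =>
      (((Nat.factorial k : ℝ)⁻¹) • ((q * t) • P) ^ k) z y :=
    fun z => Pi.summable.1 (Pi.summable.1 hexp z) y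
  refine (summable_sum fun z (_ : z ∈ univ) =>
    (hentry z).mul_left (Real.exp (-(q * t)) * v z)).congr fun k => ?_
  simp only [vecMul, dotProduct, smul_pow, Matrix.smul_apply, smul_eq_mul, mul_sum]
  refine sum_congr rfl fun z _ => ?_
  ring

lemma uniformizedTransient_vecMul {τ : Type*} [Fintype τ] [DecidableEq τ] {P : Matrix σ σ ℝ}
    {L : Matrix σ τ ℝ} {P' : Matrix τ τ ℝ} (h : P * L = L * P') (v : σ → ℝ) (q t : ℝ) :
    uniformizedTransient P v q t ᵥ* L = uniformizedTransient P' (v ᵥ* L) q t := by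
  ext b
  set c : ℕ → ℝ := fun k => Real.exp (-(q * t)) * (q * t) ^ k / (Nat.factorial k)
  calc (uniformizedTransient P v q t ᵥ* L) b
      = ∑ y, ∑' k, c k * (v ᵥ* P ^ k) y * L y b := by
        simp only [vecMul, dotProduct, uniformizedTransient, tsum_mul_right]; rfl
    _ = ∑' k, ∑ y, c k * (v ᵥ* P ^ k) y * L y b :=
        (Summable.tsum_finsetSum fun y _ =>
          (summable_uniformizedTransient_term P v q t y).mul_right _).symm
    _ = ∑' k, c k * ((v ᵥ* L) ᵥ* P' ^ k) b := by
        refine tsum_congr fun k => ?_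
        rw [vecMul_vecMul, ← pow_mul_eq_mul_pow_of_mul_eq h, ← vecMul_vecMul]
        simp only [mul_assoc, ← mul_sum]
        rfl

end Uniformization

namespace OEF

variable {n M : ℕ}

lemma sum_fiber_Qoff (lam : Fin n → ℝ) (mu : ℝ) (i : Fin n) {x : Fin n → Fin (M+1)}
    {b : Fin (M+1)} (hb : b ≠ x i) :
    ∑ y with y i = b, Qoff n M lam mu x y = QbarOff M (lam i) mu (x i) b := by
  have harrival : ∀ j, ∑ y : Fin n → Fin (M+1) with y i = b,
      (if (y j : ℕ) = x j + 1 ∧ ∀ k, k ≠ j → y k = x k then lam j else 0)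
        = if j = i then (if (b : ℕ) = x i + 1 then lam i else 0) else 0 := by
    intro j
    rcases eq_or_ne j i with rfl | hj
    · rw [if_pos rfl, sum_eq_single_of_mem (Function.update x j b) (by simp)]
      · simp +contextual [Function.update_of_ne]
      · intro y hy hne
        rw [if_neg]
        rintro ⟨-, hy'⟩
        refine hne (funext fun k => ?_)
        rcases eq_or_ne k j with rfl | hk
        · simpa using (mem_filter.1 hy).2
        · simp [hk, hy' k hk]
    · rw [if_neg hj]
      refine sum_eq_zero fun y hy => if_neg ?_
      rintro ⟨-, hy'⟩
      exact hb ((mem_filter.1 hy).2 ▸ hy' i hj.symm)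
  have hreset : ∑ y : Fin n → Fin (M+1) with y i = b,
      (if y = (fun _ => 0) ∧ x ≠ (fun _ => 0) then mu else 0)
        = if b = 0 ∧ x i ≠ 0 then mu else 0 := by
    rcases eq_or_ne b 0 with rfl | hb0
    · have hx : x ≠ fun _ => 0 := fun h => hb (by simp [h])
      rw [sum_eq_single_of_mem (fun _ => 0) (by simp)]
      · simp [hx, hb.symm]
      · intro y _ hy
        simp [hy]
    · rw [if_neg fun h => hb0 h.1]
      refine sum_eq_zero fun y hy => if_neg ?_
      rintro ⟨rfl, -⟩
      exact hb0 (mem_filter.1 hy).2.symm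
  simp only [Qoff, QbarOff, sum_add_distrib]
  rw [sum_comm]
  simp_rw [harrival]
  rw [hreset]
  simp

lemma Qgen_mul_lumpMatrix (lam : Fin n → ℝ) (mu : ℝ) (i : Fin n) :
    of (Qgen n M lam mu) * lumpMatrix ℝ (fun x : Fin n → Fin (M+1) => x i)
      = lumpMatrix ℝ (fun x : Fin n → Fin (M+1) => x i) * of (Qbar M (lam i) mu) :=
  generatorOfRates_mul_lumpMatrix _ fun _ _ hb => sum_fiber_Qoff lam mu i hb

lemma Pmat_mul_lumpMatrix (lam : Fin n → ℝ) (mu qhat : ℝ) (i : Fin n) :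
    Pmat n M lam mu qhat * lumpMatrix ℝ (fun x : Fin n → Fin (M+1) => x i)
      = lumpMatrix ℝ (fun x : Fin n → Fin (M+1) => x i) * PbarMat M (lam i) mu qhat :=
  one_add_smul_mul_eq_mul_one_add_smul (Qgen_mul_lumpMatrix lam mu i) qhat⁻¹

lemma delta0_vecMul_lumpMatrix (i : Fin n) :
    delta0 n M ᵥ* lumpMatrix ℝ (fun x : Fin n → Fin (M+1) => x i) = delta0bar M := by
  ext b
  simp [vecMul_lumpMatrix_apply, delta0, delta0bar, sum_ite_eq', eq_comm]

lemma transientP_vecMul_lumpMatrix (lam : Fin n → ℝ) (mu qhat t : ℝ) (i : Fin n) :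
    transientP n M lam mu qhat t ᵥ* lumpMatrix ℝ (fun x : Fin n → Fin (M+1) => x i)
      = transientPbar M (lam i) mu qhat t := by
  change uniformizedTransient _ _ qhat t ᵥ* _ = uniformizedTransient _ _ qhat t
  rw [← delta0_vecMul_lumpMatrix i]
  exact uniformizedTransient_vecMul (Pmat_mul_lumpMatrix lam mu qhat i) _ qhat t

end OEF

theorem expected_transient_net_reward_student_eq_general (n M : ℕ) (lam : Fin n → ℝ) (mu : ℝ)
    (qhat : ℝ) (i : Fin n) (alpha : ℝ) (m : ℕ) (delta : ℝ) :
    ∀ t : ℝ, 0 ≤ t →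
      ∑ x : Fin n → Fin (M+1),
          (((min (x i : ℕ) m : ℕ) : ℝ) * delta ^ Real.log mu - alpha * ((x i : ℕ) : ℝ))
            * transientP n M lam mu qhat t x
        = ∑ a : Fin (M+1),
            (((min (a : ℕ) m : ℕ) : ℝ) * delta ^ Real.log mu - alpha * ((a : ℕ) : ℝ))
              * transientPbar M (lam i) mu qhat t a := by
  intro t _
  rw [← OEF.transientP_vecMul_lumpMatrix lam mu qhat t i]
  exact sum_comp_mul_eq_sum_mul_vecMul_lumpMatrix (fun x : Fin n → Fin (M+1) => x i)
    (fun a : Fin (M+1) => ((min (a : ℕ) m : ℕ) : ℝ) * delta ^ Real.log mu - alpha * (a : ℕ)) _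

/-- The expected transient net reward of student `i` computed in the
original OEF chain equals that computed in its lumped chain, for every `t ≥ 0`.
The net reward in state `x` is `min(xᵢ,m)·δ^{ln μ} − α·xᵢ`. -/
theorem expected_transient_net_reward_student_eq (n M : ℕ) (hn : 1 ≤ n) (hM : 1 ≤ M)
    (lam : Fin n → ℝ) (hlam : ∀ j, 0 < lam j) (mu : ℝ) (hmu : 0 < mu)
    (qhat : ℝ) (hq : 0 < qhat)
    (hqbound : ∀ x : Fin n → Fin (M+1), -(Qgen n M lam mu x x) ≤ qhat)
    (i : Fin n) (alpha : ℝ) (halpha : 0 < alpha ∧ alpha < 1)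
    (m : ℕ) (hm : 1 ≤ m ∧ m ≤ M)
    (delta : ℝ) (hdelta : 0 < delta ∧ delta < 1) :
    ∀ t : ℝ, 0 ≤ t →
      ∑ x : Fin n → Fin (M+1),
          (((min (x i : ℕ) m : ℕ) : ℝ) * delta ^ Real.log mu - alpha * ((x i : ℕ) : ℝ))
            * transientP n M lam mu qhat t x
        = ∑ a : Fin (M+1),
            (((min (a : ℕ) m : ℕ) : ℝ) * delta ^ Real.log mu - alpha * ((a : ℕ) : ℝ))
              * transientPbar M (lam i) mu qhat t a :=
  expected_transient_net_reward_student_eq_general n M lam mu qhat i alpha m delta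
end

section
/- For every t ≥ 0, the expected transient net reward of the instructor computed in the original chain equals the c-weighted sum of her expected transient net rewards in the n lumped chains: ∑_{x ∈ S} R^I(x) · π^t(x) = ∑_{i=1}^{n} c_i · ∑_{a=0}^{M} (a·δ^{ln μ} − β) · π̄ᵢ^t(a). -/
open scoped BigOperators

/-
Projecting a state onto its `i`-th coordinate lumps the OEF chain onto the chain of `Q̄ᵢ`:
from any state `x`, the total rate into the states whose `i`-th coordinate is `b ≠ xᵢ` is
`Q̄ᵢ(xᵢ, b)`, since only the arrivals of student `i` change that coordinate and the instructor
resets every coordinate to `0`; for a generator the diagonal case follows from zero row sums.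
Uniformization preserves lumpability, so the `i`-th coordinate of the OEF chain has law
`π̄ᵢ^t` at time `t`, and the reward is a `c`-weighted sum of functions of single coordinates.
-/

open Finset Matrix Nat

section Lumping

variable {ι κ : Type*} [DecidableEq κ]

def lumpingMatrix (R : Type*) [Zero R] [One R] (π : ι → κ) : Matrix ι κ R :=
  of fun x b => if π x = b then 1 else 0

section CommSemiring

variable {R : Type*} [CommSemiring R]

theorem lumpingMatrix_mulVec [Fintype κ] (π : ι → κ) (f : κ → R) :
    lumpingMatrix R π *ᵥ f = f ∘ π := by
  ext x
  simp [lumpingMatrix, mulVec, dotProduct]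

theorem mul_lumpingMatrix_apply [Fintype ι] (P : Matrix ι ι R) (π : ι → κ) (x : ι) (b : κ) :
    (P * lumpingMatrix R π) x b = ∑ y with π y = b, P x y := by
  simp [lumpingMatrix, mul_apply, sum_filter]

theorem lumpingMatrix_mul_apply [Fintype κ] (Pbar : Matrix κ κ R) (π : ι → κ) (x : ι) (b : κ) :
    (lumpingMatrix R π * Pbar) x b = Pbar (π x) b := by
  simp [lumpingMatrix, mul_apply]

variable [Fintype ι] [Fintype κ]

def Lumpable (P : Matrix ι ι R) (Pbar : Matrix κ κ R) (π : ι → κ) : Prop :=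
  P * lumpingMatrix R π = lumpingMatrix R π * Pbar

variable {P : Matrix ι ι R} {Pbar : Matrix κ κ R} {π : ι → κ}

theorem lumpable_iff :
    Lumpable P Pbar π ↔ ∀ x b, ∑ y with π y = b, P x y = Pbar (π x) b := by
  simp only [Lumpable, ← ext_iff, mul_lumpingMatrix_apply, lumpingMatrix_mul_apply]

theorem sum_comp_mul_eq_sum_mul_vecMul_lumpingMatrix (π : ι → κ) (f : κ → R) (u : ι → R) :
    ∑ x, f (π x) * u x = ∑ b, f b * (u ᵥ* lumpingMatrix R π) b := by
  simpa [dotProduct, lumpingMatrix_mulVec, mul_comm] using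
    dotProduct_mulVec u (lumpingMatrix R π) f

variable [DecidableEq ι]

theorem Lumpable.pow (h : Lumpable P Pbar π) (k : ℕ) : Lumpable (P ^ k) (Pbar ^ k) π := by
  induction k with
  | zero => simp [Lumpable]
  | succ k ih => rw [Lumpable, pow_succ, pow_succ, Matrix.mul_assoc, h, ← Matrix.mul_assoc, ih,
      Matrix.mul_assoc]

theorem Lumpable.one_add_smul (h : Lumpable P Pbar π) (c : R) :
    Lumpable (1 + c • P) (1 + c • Pbar) π := by
  rw [Lumpable, Matrix.add_mul, Matrix.mul_add, Matrix.smul_mul, Matrix.mul_smul, h,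
    Matrix.one_mul, Matrix.mul_one]

theorem Lumpable.vecMul_pow (h : Lumpable P Pbar π) (v : ι → R) (k : ℕ) :
    v ᵥ* P ^ k ᵥ* lumpingMatrix R π = v ᵥ* lumpingMatrix R π ᵥ* Pbar ^ k := by
  rw [vecMul_vecMul, h.pow k, ← vecMul_vecMul]

end CommSemiring

theorem lumpable_of_sum_eq_zero {R : Type*} [CommRing R] [Fintype ι] [Fintype κ]
    {Q : Matrix ι ι R} {Qbar : Matrix κ κ R} {π : ι → κ} (hQ : ∀ x, ∑ y, Q x y = 0)
    (hQbar : ∀ a, ∑ b, Qbar a b = 0)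
    (hoff : ∀ x b, b ≠ π x → ∑ y with π y = b, Q x y = Qbar (π x) b) :
    Lumpable Q Qbar π := by
  refine lumpable_iff.2 fun x b => ?_
  rcases eq_or_ne b (π x) with rfl | hb
  · have htotal : ∑ b, ∑ y with π y = b, Q x y = ∑ b, Qbar (π x) b := by
      rw [sum_fiberwise, hQ, hQbar]
    rw [← add_sum_erase _ _ (mem_univ (π x)), ← add_sum_erase _ _ (mem_univ (π x)),
      sum_congr rfl fun b hb => hoff x b (ne_of_mem_erase hb)] at htotal
    exact add_right_cancel htotal
  · exact hoff x b hb

end Lumping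

section Uniformization

variable {ι κ : Type*} [Fintype ι] [DecidableEq ι]

-- `transientP` and `transientPbar` are this series at `s = qhat * t`.
noncomputable def uniformization (P : Matrix ι ι ℝ) (v : ι → ℝ) (s : ℝ) (x : ι) : ℝ :=
  ∑' k : ℕ, Real.exp (-s) * s ^ k / k ! * (v ᵥ* P ^ k) x

-- An entry of `exp (-s) • exp (s • P)`, so no stochasticity of `P` is needed.
theorem summable_uniformization (P : Matrix ι ι ℝ) (v : ι → ℝ) (s : ℝ) (x : ι) :
    Summable fun k : ℕ => Real.exp (-s) * s ^ k / k ! * (v ᵥ* P ^ k) x := by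
  let _ : NormedRing (Matrix ι ι ℝ) := Matrix.linftyOpNormedRing
  let _ : NormedAlgebra ℝ (Matrix ι ι ℝ) := Matrix.linftyOpNormedAlgebra
  have hexp := NormedSpace.expSeries_summable' (𝕂 := ℝ) (s • P)
  have hentry : ∀ y, Summable fun k : ℕ => ((k ! : ℝ)⁻¹ • (s • P) ^ k) y x :=
    fun y => Pi.summable.1 (Pi.summable.1 hexp y) x
  refine ((summable_sum (s := univ) fun y _ => (hentry y).mul_left (v y)).mul_left
    (Real.exp (-s))).congr fun k => ?_
  simp only [smul_pow, Matrix.smul_apply, smul_eq_mul, vecMul, dotProduct, mul_sum]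
  exact sum_congr rfl fun y _ => by ring

theorem sum_mul_uniformization (P : Matrix ι ι ℝ) (v : ι → ℝ) (s : ℝ) (g : ι → ℝ) :
    ∑ x, g x * uniformization P v s x
      = ∑' k : ℕ, Real.exp (-s) * s ^ k / k ! * ∑ x, g x * (v ᵥ* P ^ k) x := by
  simp_rw [uniformization, ← tsum_mul_left, mul_sum]
  rw [← Summable.tsum_finsetSum fun x _ => (summable_uniformization P v s x).mul_left (g x)]
  exact tsum_congr fun k => sum_congr rfl fun x _ => by ring

theorem Lumpable.sum_comp_mul_uniformization [Fintype κ] [DecidableEq κ] {P : Matrix ι ι ℝ}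
    {Pbar : Matrix κ κ ℝ} {π : ι → κ} (h : Lumpable P Pbar π) (f : κ → ℝ) (v : ι → ℝ)
    (s : ℝ) :
    ∑ x, f (π x) * uniformization P v s x
      = ∑ b, f b * uniformization Pbar (v ᵥ* lumpingMatrix ℝ π) s b := by
  simp_rw [sum_mul_uniformization, sum_comp_mul_eq_sum_mul_vecMul_lumpingMatrix π f,
    h.vecMul_pow]

end Uniformization

theorem sum_ite_eq_neg_sum_erase_eq_zero {ι G : Type*} [Fintype ι] [DecidableEq ι]
    [AddCommGroup G] (r : ι → ι → G) (x : ι) :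
    ∑ y, (if x = y then -∑ z ∈ univ.erase x, r x z else r x y) = 0 := by
  rw [← add_sum_erase _ _ (mem_univ x), if_pos rfl,
    sum_congr rfl fun y hy => if_neg (ne_of_mem_erase hy).symm, neg_add_cancel]

section OEF

variable {n M : ℕ}

theorem sum_filter_jump_of_ne (l : ℝ) {i j : Fin n} (hji : j ≠ i) {x : Fin n → Fin (M+1)}
    {b : Fin (M+1)} (hb : b ≠ x i) :
    ∑ y : Fin n → Fin (M+1) with y i = b,
      (if (y j : ℕ) = x j + 1 ∧ ∀ k, k ≠ j → y k = x k then l else 0) = 0 :=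
  sum_eq_zero fun _ hy => if_neg fun hjump => hb ((mem_filter.1 hy).2 ▸ hjump.2 i hji.symm)

theorem sum_filter_jump_self (l : ℝ) (i : Fin n) (x : Fin n → Fin (M+1)) (b : Fin (M+1)) :
    ∑ y : Fin n → Fin (M+1) with y i = b,
      (if (y i : ℕ) = x i + 1 ∧ ∀ k, k ≠ i → y k = x k then l else 0)
      = if (b : ℕ) = x i + 1 then l else 0 := by
  have hjump : ∀ y : Fin n → Fin (M+1),
      (y i = b ∧ (y i : ℕ) = x i + 1 ∧ ∀ k, k ≠ i → y k = x k)
      ↔ ((b : ℕ) = x i + 1 ∧ y = Function.update x i b) := by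
    intro y
    constructor
    · rintro ⟨rfl, hi, hk⟩
      exact ⟨hi, funext fun k => by
        rcases eq_or_ne k i with rfl | hki <;> simp [Function.update_of_ne, *]⟩
    · rintro ⟨hb, rfl⟩
      exact ⟨by simp, by simpa using hb, fun k hki => Function.update_of_ne hki _ _⟩
  rw [sum_filter]
  simp_rw [← ite_and, hjump]
  by_cases hb : (b : ℕ) = x i + 1 <;> simp [hb]

theorem sum_filter_reset (m : ℝ) (i : Fin n) (x : Fin n → Fin (M+1)) {b : Fin (M+1)}
    (hb : b ≠ x i) :
    ∑ y : Fin n → Fin (M+1) with y i = b,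
      (if y = (fun _ => 0) ∧ x ≠ (fun _ => 0) then m else 0)
      = if b = 0 ∧ x i ≠ 0 then m else 0 := by
  simp_rw [ite_and, sum_ite_eq', mem_filter, mem_univ, true_and]
  rcases eq_or_ne b 0 with rfl | hb0
  · have hx : x ≠ fun _ => 0 := fun hx => hb (by simp [hx])
    simp [hx, hb.symm]
  · simp [hb0, Ne.symm hb0]

theorem sum_filter_Qoff (lam : Fin n → ℝ) (mu : ℝ) {i : Fin n} {x : Fin n → Fin (M+1)}
    {b : Fin (M+1)} (hb : b ≠ x i) :
    ∑ y : Fin n → Fin (M+1) with y i = b, Qoff n M lam mu x y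
      = QbarOff M (lam i) mu (x i) b := by
  simp only [Qoff, QbarOff, sum_add_distrib]
  rw [sum_comm, sum_eq_single i (fun j _ hji => sum_filter_jump_of_ne _ hji hb) (by simp),
    sum_filter_jump_self, sum_filter_reset _ _ _ hb]

theorem lumpable_Qgen (lam : Fin n → ℝ) (mu : ℝ) (i : Fin n) :
    Lumpable (of (Qgen n M lam mu)) (of (Qbar M (lam i) mu)) (fun x => x i) := by
  refine lumpable_of_sum_eq_zero (fun x => sum_ite_eq_neg_sum_erase_eq_zero _ x)
    (fun a => sum_ite_eq_neg_sum_erase_eq_zero _ a) fun x b hb => ?_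
  rw [of_apply, Qbar, if_neg hb.symm, ← sum_filter_Qoff lam mu hb]
  refine sum_congr rfl fun y hy => ?_
  have hxy : x ≠ y := fun h => hb (h ▸ (mem_filter.1 hy).2).symm
  rw [of_apply, Qgen, if_neg hxy]

theorem lumpable_Pmat (lam : Fin n → ℝ) (mu qhat : ℝ) (i : Fin n) :
    Lumpable (Pmat n M lam mu qhat) (PbarMat M (lam i) mu qhat) (fun x => x i) :=
  (lumpable_Qgen lam mu i).one_add_smul _

theorem delta0_vecMul_lumpingMatrix (i : Fin n) :
    delta0 n M ᵥ* lumpingMatrix ℝ (fun x => x i) = delta0bar M := by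
  ext a
  simp only [vecMul, dotProduct, delta0, ite_mul, one_mul, zero_mul, sum_ite_eq', mem_univ,
    if_true]
  simp [lumpingMatrix, delta0bar, eq_comm]

end OEF

theorem expected_transient_net_reward_instructor_eq_general (n M : ℕ)
    (lam : Fin n → ℝ) (mu : ℝ) (qhat : ℝ) (beta : ℝ) (delta : ℝ) (c : Fin n → ℝ) :
    ∀ t : ℝ, 0 ≤ t →
      ∑ x : Fin n → Fin (M+1),
          (∑ i, c i * (((x i : ℕ) : ℝ) * delta ^ Real.log mu - beta))
            * transientP n M lam mu qhat t x
        = ∑ i, c i *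
            ∑ a : Fin (M+1),
              (((a : ℕ) : ℝ) * delta ^ Real.log mu - beta)
                * transientPbar M (lam i) mu qhat t a := by
  intro t _
  have hcoordinate : ∀ i (f : Fin (M+1) → ℝ), ∑ x, f (x i) * transientP n M lam mu qhat t x
      = ∑ a, f a * transientPbar M (lam i) mu qhat t a := fun i f => by
    have h := (lumpable_Pmat lam mu qhat i).sum_comp_mul_uniformization f (delta0 n M) (qhat * t)
    rwa [delta0_vecMul_lumpingMatrix] at h
  simp_rw [sum_mul, mul_assoc]
  rw [sum_comm]
  refine sum_congr rfl fun i _ => ?_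
  rw [← mul_sum, hcoordinate i fun a => (a : ℝ) * delta ^ Real.log mu - beta]

/-- For every `t ≥ 0`, the expected transient net reward of the
instructor computed in the original OEF chain equals the `c`-weighted sum of her
expected transient net rewards in the `n` lumped chains. Her net reward in state `x`
is `∑ᵢ cᵢ (xᵢ·δ^{ln μ} − β)`. -/
theorem expected_transient_net_reward_instructor_eq (n M : ℕ) (hn : 1 ≤ n) (hM : 1 ≤ M)
    (lam : Fin n → ℝ) (hlam : ∀ j, 0 < lam j) (mu : ℝ) (hmu : 0 < mu)
    (qhat : ℝ) (hq : 0 < qhat)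
    (hqbound : ∀ x : Fin n → Fin (M+1), -(Qgen n M lam mu x x) ≤ qhat)
    (beta : ℝ) (hbeta : 0 < beta ∧ beta < 1)
    (delta : ℝ) (hdelta : 0 < delta ∧ delta < 1)
    (c : Fin n → ℝ) (hc : ∀ i, 0 ≤ c i ∧ c i ≤ 1) (hcsum : ∑ i, c i = 1) :
    ∀ t : ℝ, 0 ≤ t →
      ∑ x : Fin n → Fin (M+1),
          (∑ i, c i * (((x i : ℕ) : ℝ) * delta ^ Real.log mu - beta))
            * transientP n M lam mu qhat t x
        = ∑ i, c i *
            ∑ a : Fin (M+1),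
              (((a : ℕ) : ℝ) * delta ^ Real.log mu - beta)
                * transientPbar M (lam i) mu qhat t a :=
  expected_transient_net_reward_instructor_eq_general n M lam mu qhat beta delta c
end

section
/- Let λ, μ > 0, ρ = λ/μ, M ≥ 1, let m be an integer with 1 ≤ m ≤ M, let α ∈ (0,1) and δ ∈ (0,1), and let Π be the steady-state distribution Π(a) = ρ^a/(1+ρ)^{a+1} for 0 ≤ a < M, Π(M) = ρ^M/(1+ρ)^M. Then the expected steady-state net reward of the student satisfies: ∑_{a=0}^{M} ( min(a,m)·δ^{ln μ} − α·a ) · Π(a) = δ^{ln μ}·ρ·(1 − (ρ/(1+ρ))^m) − α·ρ·(1 − (ρ/(1+ρ))^M). -/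
open scoped BigOperators

lemma tail_sum_aux (rho : ℝ) (hr : 0 < rho) (k : ℕ) :
    ∀ M : ℕ, k ≤ M →
    (∑ a ∈ Finset.Ico k M, rho ^ a / (1 + rho) ^ (a + 1)) + rho ^ M / (1 + rho) ^ M
      = (rho / (1 + rho)) ^ k := by
  have h1 : (0:ℝ) < 1 + rho := by linarith
  intro M
  induction M with
  | zero =>
    intro hk
    interval_cases k
    simp
  | succ N ih =>
    intro hk
    rcases Nat.lt_or_ge k (N+1) with hlt | hge
    · have hkN : k ≤ N := Nat.lt_succ_iff.mp hlt
      rw [Finset.sum_Ico_succ_top hkN]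
      have := ih hkN
      have hstep : rho ^ N / (1 + rho) ^ (N + 1) + rho ^ (N+1) / (1 + rho) ^ (N+1)
          = rho ^ N / (1 + rho) ^ N := by
        field_simp
        ring
      linarith [this, hstep]
    · have : k = N + 1 := le_antisymm hk hge
      subst this
      simp [div_pow]
  
lemma tail_sum (rho : ℝ) (hr : 0 < rho) (k M : ℕ) (hk : k ≤ M) :
    (∑ a ∈ Finset.Ico k M, rho ^ a / (1 + rho) ^ (a + 1)) + rho ^ M / (1 + rho) ^ M
      = (rho / (1 + rho)) ^ k := tail_sum_aux rho hr k M hk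

/-- Expected steady-state net reward of the student:
`∑_{a=0}^{M} (min(a,m)·δ^{ln μ} − α·a)·Π(a)
  = δ^{ln μ}·ρ·(1 − (ρ/(1+ρ))^m) − α·ρ·(1 − (ρ/(1+ρ))^M)`. -/
theorem expected_steady_state_net_reward_student
    (lam mu rho : ℝ) (M m : ℕ) (alpha delta : ℝ) (Pi : ℕ → ℝ)
    (hlam : 0 < lam) (hmu : 0 < mu) (hM : 1 ≤ M)
    (hm1 : 1 ≤ m) (hmM : m ≤ M)
    (halpha : 0 < alpha ∧ alpha < 1) (hdelta : 0 < delta ∧ delta < 1)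
    (hrho : rho = lam / mu)
    (hPi : ∀ a, a < M → Pi a = rho ^ a / (1 + rho) ^ (a + 1))
    (hPiM : Pi M = rho ^ M / (1 + rho) ^ M) :
    ∑ a ∈ Finset.range (M + 1),
        (((min a m : ℕ) : ℝ) * delta ^ Real.log mu - alpha * (a : ℝ)) * Pi a
      = delta ^ Real.log mu * rho * (1 - (rho / (1 + rho)) ^ m)
        - alpha * rho * (1 - (rho / (1 + rho)) ^ M) := by
  have hr : 0 < rho := by rw [hrho]; positivity
  have h1 : (0:ℝ) < 1 + rho := by linarith
  set q : ℝ := rho / (1 + rho) with hq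
  -- tail sums of Pi
  have htail : ∀ k : ℕ, k ≤ M → (∑ a ∈ Finset.Ico k (M+1), Pi a) = q ^ k := by
    intro k hk
    rw [Finset.sum_Ico_succ_top (by omega : k ≤ M), hPiM]
    rw [Finset.sum_congr rfl (fun a ha => hPi a (Finset.mem_Ico.mp ha).2)]
    exact tail_sum rho hr k M hk
  -- key induction: sum of min a n * Pi a
  have hS : ∀ n : ℕ, n ≤ M →
      (∑ a ∈ Finset.range (M+1), ((min a n : ℕ) : ℝ) * Pi a) = rho * (1 - q ^ n) := by
    intro n
    induction n with
    | zero => intro _; simp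
    | succ n ih =>
      intro hn
      have hn' : n ≤ M := by omega
      have hIco : Finset.Ico (n+1) (M+1)
          = (Finset.range (M+1)).filter (fun a => n + 1 ≤ a) := by
        ext a; simp [Finset.mem_Ico, Finset.mem_filter]; omega
      have hsplit : (∑ a ∈ Finset.range (M+1), ((min a (n+1) : ℕ) : ℝ) * Pi a)
          = (∑ a ∈ Finset.range (M+1), ((min a n : ℕ) : ℝ) * Pi a)
            + ∑ a ∈ Finset.Ico (n+1) (M+1), Pi a := by
        rw [hIco, Finset.sum_filter, ← Finset.sum_add_distrib]
        apply Finset.sum_congr rfl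
        intro a _
        have hmin : (min a (n+1) : ℕ) = min a n + (if n + 1 ≤ a then 1 else 0) := by
          split <;> omega
        rw [hmin]
        push_cast
        split <;> ring
      rw [hsplit, ih hn', htail (n+1) hn]
      have hqq : q ^ (n+1) = rho * q ^ n - rho * q ^ (n+1) := by
        rw [hq, pow_succ]
        field_simp
        ring
      linarith [hqq]
  -- split main sum
  have hsum : ∑ a ∈ Finset.range (M + 1),
        (((min a m : ℕ) : ℝ) * delta ^ Real.log mu - alpha * (a : ℝ)) * Pi a
      = delta ^ Real.log mu * (∑ a ∈ Finset.range (M+1), ((min a m : ℕ) : ℝ) * Pi a)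
        - alpha * (∑ a ∈ Finset.range (M+1), ((min a M : ℕ) : ℝ) * Pi a) := by
    rw [Finset.mul_sum, Finset.mul_sum, ← Finset.sum_sub_distrib]
    apply Finset.sum_congr rfl
    intro a ha
    have haM : a ≤ M := by
      have := Finset.mem_range.mp ha; omega
    rw [min_eq_left haM]
    ring
  rw [hsum, hS m hmM, hS M le_rfl]
  ring
end

section
/- Let λ, μ > 0, K = λ + μ, M ≥ 1, and define for t ≥ 0 the functions π^t on {0,…,M} by: π^t(0) = μ/K + (λ/K)·e^{−Kt}; for 0 < a < M, π^t(a) = ( −(λ/K)^a·(μ/K) − ∑_{y=1}^{a−1} λ^a·t^y·μ/(y!·K^{a−y+1}) + λ^{a+1}·t^a/(a!·K) )·e^{−Kt} + (λ/K)^a·(μ/K); and π^t(M) = 1 − ∑_{a=0}^{M−1} π^t(a). Then π^0(0) = 1 and π^0(a) = 0 for all 1 ≤ a ≤ M, and for every t ≥ 0 these functions solve the Kolmogorov forward equations of the lumped chain: d/dt π^t(0) = −λ·π^t(0) + μ·∑_{a=1}^{M} π^t(a); d/dt π^t(a) = −(λ+μ)·π^t(a) + λ·π^t(a−1) for 0 <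 a < M; and d/dt π^t(M) = −μ·π^t(M) + λ·π^t(M−1). -/
/-!
With the Poisson weights `p n s = sⁿ e⁻ˢ / n!` and tails `G n s = 1 - ∑_{k<n} p k s`, every
prescribed `π^t(a)` with `a < M`, including `a = 0`, has the single form
`(λ/K)^a ((μ/K) G a (Kt) + (λ/K) p a (Kt))`. The forward equations for `a < M` then follow from
`p' (n+1) = p n - p (n+1)` and `G' (n+1) = p n`, and the one for `M` from conservation of mass.
-/

open Finset Real

noncomputable def poissonProb (s : ℝ) (n : ℕ) : ℝ := s ^ n / n.factorial * exp (-s)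

noncomputable def poissonTail (s : ℝ) (n : ℕ) : ℝ := 1 - ∑ k ∈ range n, poissonProb s k

theorem poissonTail_zero (s : ℝ) : poissonTail s 0 = 1 := by
  simp [poissonTail]

theorem hasDerivAt_poissonTail_zero (s : ℝ) : HasDerivAt (poissonTail · 0) 0 s := by
  simpa [poissonTail_zero] using hasDerivAt_const s (1 : ℝ)

theorem poissonTail_succ (s : ℝ) (n : ℕ) :
    poissonTail s (n + 1) = poissonTail s n - poissonProb s n := by
  rw [poissonTail, poissonTail, sum_range_succ]
  ring

theorem hasDerivAt_poissonProb_zero (s : ℝ) :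
    HasDerivAt (poissonProb · 0) (-poissonProb s 0) s := by
  simpa [poissonProb] using (hasDerivAt_neg s).exp

theorem hasDerivAt_poissonProb_succ (s : ℝ) (n : ℕ) :
    HasDerivAt (poissonProb · (n + 1)) (poissonProb s n - poissonProb s (n + 1)) s := by
  refine (((hasDerivAt_pow (n + 1) s).div_const _).mul (hasDerivAt_neg s).exp).congr_deriv ?_
  simp only [poissonProb, Nat.factorial_succ]
  push_cast
  field_simp
  ring

theorem hasDerivAt_sum_range_poissonProb (s : ℝ) (n : ℕ) :
    HasDerivAt (fun x => ∑ k ∈ range (n + 1), poissonProb x k) (-poissonProb s n) s := by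
  induction n with
  | zero => simpa using hasDerivAt_poissonProb_zero s
  | succ n ih =>
    simp only [sum_range_succ _ (n + 1)]
    exact (ih.add (hasDerivAt_poissonProb_succ s n)).congr_deriv (by ring)

theorem hasDerivAt_poissonTail_succ (s : ℝ) (n : ℕ) :
    HasDerivAt (poissonTail · (n + 1)) (poissonProb s n) s := by
  simpa [poissonTail] using (hasDerivAt_sum_range_poissonProb s n).const_sub 1

theorem poissonProb_zero_succ (n : ℕ) : poissonProb 0 (n + 1) = 0 := by
  simp [poissonProb]

theorem poissonTail_zero_succ (n : ℕ) : poissonTail 0 (n + 1) = 0 := by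
  simp [poissonTail, sum_range_succ', poissonProb]

theorem sum_range_succ_eq_add_sum_Icc {M : Type*} [AddCommMonoid M] (f : ℕ → M) (n : ℕ) :
    ∑ a ∈ range (n + 1), f a = f 0 + ∑ a ∈ Icc 1 n, f a := by
  rw [range_eq_Ico, sum_eq_sum_Ico_succ_bot n.succ_pos, zero_add, Nat.succ_eq_add_one,
    Ico_add_one_right_eq_Icc]

noncomputable def lumpedTransient (lam mu K : ℝ) (a : ℕ) (t : ℝ) : ℝ :=
  (lam / K) ^ a * (mu / K * poissonTail (K * t) a + lam / K * poissonProb (K * t) a)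

section
variable {lam mu K : ℝ}

theorem lumpedTransient_zero (t : ℝ) :
    lumpedTransient lam mu K 0 t = mu / K + lam / K * exp (-(K * t)) := by
  simp [lumpedTransient, poissonTail_zero, poissonProb]

theorem hasDerivAt_lumpedTransient_zero (hK : K ≠ 0) (t : ℝ) :
    HasDerivAt (lumpedTransient lam mu K 0) (mu - K * lumpedTransient lam mu K 0 t) t := by
  have hK' := (hasDerivAt_id t).const_mul K
  have hG := (hasDerivAt_poissonTail_zero (K * t)).comp t hK'
  have hp := (hasDerivAt_poissonProb_zero (K * t)).comp t hK'
  refine (((hG.const_mul (mu / K)).add (hp.const_mul (lam / K))).const_mul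
    ((lam / K) ^ 0)).congr_deriv ?_
  simp only [lumpedTransient, poissonTail_zero]
  field_simp
  ring

theorem hasDerivAt_lumpedTransient_succ (hK : K ≠ 0) (a : ℕ) (t : ℝ) :
    HasDerivAt (lumpedTransient lam mu K (a + 1))
      (lam * lumpedTransient lam mu K a t - K * lumpedTransient lam mu K (a + 1) t) t := by
  have hK' := (hasDerivAt_id t).const_mul K
  have hG := (hasDerivAt_poissonTail_succ (K * t) a).comp t hK'
  have hp := (hasDerivAt_poissonProb_succ (K * t) a).comp t hK'
  refine (((hG.const_mul (mu / K)).add (hp.const_mul (lam / K))).const_mul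
    ((lam / K) ^ (a + 1))).congr_deriv ?_
  simp only [lumpedTransient, poissonTail_succ, pow_succ]
  field_simp
  ring

theorem lumpedTransient_eq_of_pos (hK : K ≠ 0) {a : ℕ} (ha : 0 < a) (t : ℝ) :
    lumpedTransient lam mu K a t =
      (-((lam / K) ^ a * (mu / K))
        - (∑ y ∈ Icc 1 (a - 1),
            lam ^ a * t ^ y * mu / ((Nat.factorial y : ℝ) * K ^ (a - y + 1)))
        + lam ^ (a + 1) * t ^ a / ((Nat.factorial a : ℝ) * K)) * exp (-(K * t))
      + (lam / K) ^ a * (mu / K) := by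
  obtain ⟨b, rfl⟩ : ∃ b, a = b + 1 := ⟨a - 1, by omega⟩
  have hterm : ∀ y ∈ Icc 1 b,
      lam ^ (b + 1) * t ^ y * mu / ((y.factorial : ℝ) * K ^ (b + 1 - y + 1)) =
        (lam / K) ^ (b + 1) * (mu / K) * ((K * t) ^ y / y.factorial) := by
    intro y hy
    have hpow : K ^ (b + 1 - y + 1) = K ^ (b + 2) / K ^ y := by
      rw [eq_div_iff (pow_ne_zero _ hK), ← pow_add]
      grind
    rw [hpow, div_pow]
    field_simp
    ring
  rw [Nat.add_sub_cancel, sum_congr rfl hterm, ← mul_sum, lumpedTransient, poissonTail,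
    sum_range_succ_eq_add_sum_Icc]
  simp only [poissonProb, ← sum_mul, div_pow]
  field_simp
  ring

theorem lumpedTransient_at_zero (h : lam + mu ≠ 0) (a : ℕ) :
    lumpedTransient lam mu (lam + mu) a 0 = if a = 0 then 1 else 0 := by
  cases a with
  | zero => simp [lumpedTransient, poissonTail, poissonProb]; field_simp; ring
  | succ n => simp [lumpedTransient, poissonTail_zero_succ, poissonProb_zero_succ]

end

theorem hasDerivAt_one_sub_sum_range {p : ℝ → ℕ → ℝ} {lam mu t : ℝ} {m : ℕ}
    (h0 : HasDerivAt (fun s => p s 0) (mu - (lam + mu) * p t 0) t)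
    (hsucc : ∀ a < m,
      HasDerivAt (fun s => p s (a + 1)) (lam * p t a - (lam + mu) * p t (a + 1)) t) :
    HasDerivAt (fun s => 1 - ∑ a ∈ range (m + 1), p s a)
      (-(mu * (1 - ∑ a ∈ range (m + 1), p t a)) + lam * p t m) t := by
  simp only [sum_range_succ' _ m]
  have hsum := HasDerivAt.fun_sum fun a ha => hsucc a (mem_range.mp ha)
  refine ((hsum.add h0).const_sub 1).congr_deriv ?_
  have h1 := sum_range_succ (p t) m
  have h2 := sum_range_succ' (p t) m
  rw [sum_sub_distrib, ← mul_sum, ← mul_sum]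
  linear_combination lam * (h1 - h2)

/-- The explicit transient distribution of the lumped
single-student chain has the correct initial condition and solves the Kolmogorov
forward equations. -/
theorem lumped_transient_solves_forward_equations
    (lam mu K : ℝ) (M : ℕ) (pit : ℝ → ℕ → ℝ)
    (hlam : 0 < lam) (hmu : 0 < mu) (hK : K = lam + mu) (hM : 1 ≤ M)
    (h0 : ∀ t : ℝ, pit t 0 = mu / K + (lam / K) * Real.exp (-(K * t)))
    (hmid : ∀ t : ℝ, ∀ a, 0 < a → a < M →
      pit t a =
        (-((lam / K) ^ a * (mu / K))
          - (∑ y ∈ Finset.Icc 1 (a - 1),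
              lam ^ a * t ^ y * mu / ((Nat.factorial y : ℝ) * K ^ (a - y + 1)))
          + lam ^ (a + 1) * t ^ a / ((Nat.factorial a : ℝ) * K)) * Real.exp (-(K * t))
        + (lam / K) ^ a * (mu / K))
    (hlast : ∀ t : ℝ, pit t M = 1 - ∑ a ∈ Finset.range M, pit t a) :
    (pit 0 0 = 1 ∧ ∀ a, 1 ≤ a → a ≤ M → pit 0 a = 0)
    ∧
    (∀ t : ℝ, 0 ≤ t →
      HasDerivAt (fun s => pit s 0)
        (-(lam * pit t 0) + mu * ∑ a ∈ Finset.Icc 1 M, pit t a) t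
      ∧ (∀ a, 0 < a → a < M →
          HasDerivAt (fun s => pit s a)
            (-((lam + mu) * pit t a) + lam * pit t (a - 1)) t)
      ∧ HasDerivAt (fun s => pit s M)
          (-(mu * pit t M) + lam * pit t (M - 1)) t) := by
  subst hK
  have hK : lam + mu ≠ 0 := by positivity
  obtain ⟨m, rfl⟩ : ∃ m, M = m + 1 := ⟨M - 1, by omega⟩
  have hpit : ∀ a ≤ m, (fun s => pit s a) = lumpedTransient lam mu (lam + mu) a := by
    intro a ha
    funext s
    rcases a.eq_zero_or_pos with rfl | ha0
    · rw [h0, lumpedTransient_zero]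
    · rw [hmid s a ha0 (by omega), lumpedTransient_eq_of_pos hK ha0]
  have hpitM : ∀ t,
      pit t (m + 1) = 1 - ∑ a ∈ range (m + 1), lumpedTransient lam mu (lam + mu) a t := by
    intro t
    rw [hlast t, sum_congr rfl fun a ha => congrFun (hpit a (by grind)) t]
  have hmass : ∀ t, ∑ a ∈ Icc 1 (m + 1), pit t a = 1 - pit t 0 := by
    intro t
    have := sum_range_succ_eq_add_sum_Icc (pit t) (m + 1)
    rw [sum_range_succ, hlast t] at this
    linarith
  refine ⟨⟨?_, fun a ha haM => ?_⟩, fun t _ => ⟨?_, fun a ha haM => ?_, ?_⟩⟩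
  · rw [congrFun (hpit 0 m.zero_le) 0, lumpedTransient_at_zero hK, if_pos rfl]
  · rcases haM.lt_or_eq with haM | rfl
    · rw [congrFun (hpit a (by omega)) 0, lumpedTransient_at_zero hK, if_neg (by omega)]
    · simp [hpitM, lumpedTransient_at_zero hK]
  · rw [hpit 0 m.zero_le, hmass, congrFun (hpit 0 m.zero_le) t]
    exact (hasDerivAt_lumpedTransient_zero hK t).congr_deriv (by ring)
  · obtain ⟨b, rfl⟩ : ∃ b, a = b + 1 := ⟨a - 1, by omega⟩
    rw [hpit _ (by omega), Nat.add_sub_cancel, congrFun (hpit _ (by omega)) t,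
      congrFun (hpit b (by omega)) t]
    exact (hasDerivAt_lumpedTransient_succ hK b t).congr_deriv (by ring)
  · rw [funext hpitM, hpitM, Nat.add_sub_cancel, congrFun (hpit m le_rfl) t]
    exact hasDerivAt_one_sub_sum_range (hasDerivAt_lumpedTransient_zero hK t)
      fun a _ => hasDerivAt_lumpedTransient_succ hK a t
end
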